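/- Assume p < q (i.e. β is not a simple root). Let g be a matrix with entries in 𝒪 such that g_{i,j} ∈ t^{λ_i − λ_j}𝒪 for all 1 ≤ i < j ≤ n+1, and such that (x̃⁻¹ g x)_{i,j} ∈ t^{ν*_i − ν*_j}𝒪 for all 1 ≤ i < j ≤ n+1. Then t divides g_{q+1,j} in 𝒪 for every j with q+1 ≤ j ≤ n. -/

import Mathlib

open Matrix

noncomputable section

/-- The ring `𝒪 = ℂ[[t]]` of formal power series. -/
abbrev OO : Type := PowerSeries ℂ

/-- The field `K = ℂ((t))` of formal Laurent series. -/
abbrev KK : Type := LaurentSeries ℂ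

/-- `t^k ∈ K` for an integer `k`. -/
def tz (k : ℤ) : KK := HahnSeries.single k 1

/-- The inclusion `𝒪 → K`. -/
def coeO : OO →+* KK := HahnSeries.ofPowerSeries ℤ ℂ

/-- `f` belongs to the `𝒪`-lattice `t^k 𝒪 ⊆ K`. -/
def memT (k : ℤ) (f : KK) : Prop := ∃ w : OO, f = tz k * coeO w

/-- The `GL`-coordinates of the coroot `β∨ = e_p − e_{q+1}` (indices `0`-based). -/
def bcov (p q : ℕ) (i : ℕ) : ℤ := (if i = p then 1 else 0) - (if i = q + 1 then 1 else 0)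

/-- The matrix `x = I + Σ_{j=p+1}^{q+1} t^{λ_p − λ_j − N} E_{p,j}` (indices `0`-based). -/
def xMat (n N p q : ℕ) (lam : ℕ → ℤ) : Matrix (Fin (n+1)) (Fin (n+1)) KK :=
  Matrix.of fun i j =>
    if i = j then 1
    else if (i : ℕ) = p ∧ p < (j : ℕ) ∧ (j : ℕ) ≤ q + 1 then tz (lam p - lam j - N)
    else 0

/-- The matrix `x̃ = I + Σ_{i=p}^{q} t^{λ_i − λ_{q+1} − N} E_{i,q+1}` (indices `0`-based). -/
def xtMat (n N p q : ℕ) (lam : ℕ → ℤ) : Matrix (Fin (n+1)) (Fin (n+1)) KK :=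
  Matrix.of fun i j =>
    if i = j then 1
    else if p ≤ (i : ℕ) ∧ (i : ℕ) ≤ q ∧ (j : ℕ) = q + 1 then tz (lam i - lam (q + 1) - N)
    else 0

/-!
Write `x̃ = 1 + u e_{q+1}ᵀ` and `x = 1 + e_p wᵀ`. Since `u_{q+1} = 0`, `x̃⁻¹ = 1 - u e_{q+1}ᵀ`, so
every entry of `A = x̃⁻¹ g x` is `g_{ij} + g_{ip} w_j - u_i g_{q+1,j} - u_i g_{q+1,p} w_j`.
For `j > q+1` only `g_{q+1,j}` survives in `A_{q+1,j}`, whose valuation is at least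
`ν*_{q+1} - ν*_j ≥ N`. For `j = q+1` the entry `A_{q,q+1}` contains `t^c g_{q+1,q+1}` with
`c = λ_q - λ_{q+1} - N`, and condition (2) together with `p < q` puts every other term of
`A_{q,q+1}`, and `A_{q,q+1}` itself, in `t^{c+1} 𝒪`.
-/

section RankOneUnipotent

variable {ι R : Type*} [Fintype ι] [DecidableEq ι] [CommRing R]

theorem inv_one_add_vecMulVec_single {u : ι → R} {c : ι} (hu : u c = 0) :
    (1 + vecMulVec u (Pi.single c 1))⁻¹ = 1 - vecMulVec u (Pi.single c 1) := by
  apply inv_eq_right_inv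
  have hsq : vecMulVec u (Pi.single c 1) * vecMulVec u (Pi.single c 1) = 0 := by
    rw [vecMulVec_mul_vecMulVec, single_one_dotProduct, hu, zero_smul]
    ext; simp [vecMulVec_apply]
  rw [add_mul, mul_sub, mul_sub, hsq]
  simp

theorem one_add_vecMulVec_single_conj_apply {u : ι → R} {c : ι} (hu : u c = 0) (r : ι)
    (w : ι → R) (G : Matrix ι ι R) (i j : ι) :
    ((1 + vecMulVec u (Pi.single c 1))⁻¹ * G * (1 + vecMulVec (Pi.single r 1) w)) i j =
      G i j + G i r * w j - u i * G c j - u i * G c r * w j := by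
  rw [inv_one_add_vecMulVec_single hu, sub_mul, one_mul, mul_add, mul_one, vecMulVec_mul,
    sub_mul, mul_vecMulVec, vecMulVec_mul, vecMul_vecMulVec]
  simp only [Matrix.add_apply, Matrix.sub_apply, vecMulVec_apply, mulVec_single_one,
    single_one_vecMul, dotProduct_single_one, Pi.smul_apply, smul_eq_mul, col_apply, row_apply]
  ring

end RankOneUnipotent

section Lattices

theorem tz_mul_tz (a b : ℤ) : tz a * tz b = tz (a + b) := by
  simp [tz, HahnSeries.single_mul_single]

theorem tz_zero : tz 0 = 1 := HahnSeries.single_zero_one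

theorem coeO_X_pow (m : ℕ) : coeO (PowerSeries.X ^ m) = tz m :=
  HahnSeries.ofPowerSeries_X_pow m

theorem memT_tz (k : ℤ) : memT k (tz k) := ⟨1, by simp⟩

theorem memT_coeO (w : OO) : memT 0 (coeO w) := ⟨w, by simp [tz]⟩

variable {k l : ℤ} {f f' : KK}

theorem memT.mono (hf : memT k f) (h : l ≤ k) : memT l f := by
  obtain ⟨w, rfl⟩ := hf
  refine ⟨PowerSeries.X ^ (k - l).toNat * w, ?_⟩
  rw [map_mul, coeO_X_pow, ← mul_assoc, tz_mul_tz]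
  congr 2
  omega

theorem memT.add (hf : memT k f) (hf' : memT k f') : memT k (f + f') := by
  obtain ⟨w, rfl⟩ := hf
  obtain ⟨w', rfl⟩ := hf'
  exact ⟨w + w', by rw [map_add, mul_add]⟩

theorem memT.neg (hf : memT k f) : memT k (-f) := by
  obtain ⟨w, rfl⟩ := hf
  exact ⟨-w, by rw [map_neg]; ring⟩

theorem memT.sub (hf : memT k f) (hf' : memT k f') : memT k (f - f') :=
  sub_eq_add_neg f f' ▸ hf.add hf'.neg

theorem memT.mul (hf : memT k f) (hf' : memT l f') : memT (k + l) (f * f') := by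
  obtain ⟨w, rfl⟩ := hf
  obtain ⟨w', rfl⟩ := hf'
  exact ⟨w * w', by rw [map_mul, ← tz_mul_tz]; ring⟩

theorem memT_tz_mul_iff (m : ℤ) : memT k (tz m * f) ↔ memT (k - m) f := by
  constructor
  · intro h
    have h' := (memT_tz (-m)).mul h
    rwa [← mul_assoc, tz_mul_tz, neg_add_cancel, tz_zero, one_mul, neg_add_eq_sub] at h'
  · intro h
    have h' := (memT_tz m).mul h
    rwa [add_sub_cancel] at h'

theorem memT_coeO_iff (m : ℕ) {w : OO} : memT m (coeO w) ↔ PowerSeries.X ^ m ∣ w := by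
  constructor
  · rintro ⟨u, hu⟩
    rw [← coeO_X_pow, ← map_mul] at hu
    exact ⟨u, HahnSeries.ofPowerSeries_injective hu⟩
  · rintro ⟨u, rfl⟩
    exact ⟨u, by rw [map_mul, coeO_X_pow]⟩

theorem X_dvd_of_memT_coeO {w : OO} (h : memT k (coeO w)) (hk : 0 < k) : PowerSeries.X ∣ w := by
  simpa using (memT_coeO_iff 1).mp (h.mono (by omega))

theorem X_dvd_of_memT_tz_mul {m : ℤ} {w : OO} (h : memT k (tz m * coeO w)) (hmk : m < k) :
    PowerSeries.X ∣ w :=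
  X_dvd_of_memT_coeO ((memT_tz_mul_iff m).mp h) (by omega)

end Lattices

theorem bcov_eq_zero {p q i : ℕ} (hp : i ≠ p) (hq : i ≠ q + 1) : bcov p q i = 0 := by
  simp [bcov, hp, hq]

theorem bcov_succ {p q : ℕ} (hp : q + 1 ≠ p) : bcov p q (q + 1) = -1 := by
  simp [bcov, hp]

section Conjugation

variable {n N p q : ℕ} {lam : ℕ → ℤ}

def xtCol (n N p q : ℕ) (lam : ℕ → ℤ) (i : Fin (n + 1)) : KK :=
  if p ≤ (i : ℕ) ∧ (i : ℕ) ≤ q then tz (lam i - lam (q + 1) - N) else 0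

def xRow (n N p q : ℕ) (lam : ℕ → ℤ) (j : Fin (n + 1)) : KK :=
  if p < (j : ℕ) ∧ (j : ℕ) ≤ q + 1 then tz (lam p - lam j - N) else 0

theorem xtMat_eq_one_add (hq : q < n) :
    xtMat n N p q lam = 1 + vecMulVec (xtCol n N p q lam) (Pi.single ⟨q + 1, by omega⟩ 1) := by
  refine Matrix.ext fun i j => ?_
  simp only [xtMat, xtCol, of_apply, Matrix.add_apply, one_apply, vecMulVec_apply,
    Pi.single_apply, Fin.ext_iff]
  split_ifs <;> first | omega | simp

theorem xMat_eq_one_add (hp : p ≤ n) :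
    xMat n N p q lam = 1 + vecMulVec (Pi.single ⟨p, by omega⟩ 1) (xRow n N p q lam) := by
  refine Matrix.ext fun i j => ?_
  simp only [xMat, xRow, of_apply, Matrix.add_apply, one_apply, vecMulVec_apply,
    Pi.single_apply, Fin.ext_iff]
  split_ifs <;> first | omega | simp

theorem xtMat_inv_mul_mul_xMat_apply (hpq : p ≤ q) (hq : q < n)
    (G : Matrix (Fin (n + 1)) (Fin (n + 1)) KK) (i j : Fin (n + 1)) :
    ((xtMat n N p q lam)⁻¹ * G * xMat n N p q lam) i j =
      G i j + G i ⟨p, by omega⟩ * xRow n N p q lam j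
        - xtCol n N p q lam i * G ⟨q + 1, by omega⟩ j
        - xtCol n N p q lam i * G ⟨q + 1, by omega⟩ ⟨p, by omega⟩ * xRow n N p q lam j := by
  rw [xtMat_eq_one_add hq, xMat_eq_one_add (by omega)]
  exact one_add_vecMulVec_single_conj_apply (by simp [xtCol]) _ _ _ _ _

end Conjugation

section Entries

variable {n N p q : ℕ} {lam : ℕ → ℤ}

theorem X_dvd_apply_succ_of_lt (hpq : p ≤ q) (hq : q < n)
    (g : Matrix (Fin (n + 1)) (Fin (n + 1)) OO) (j : Fin (n + 1)) (hj : q + 1 < (j : ℕ))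
    {k : ℤ} (hk : 0 < k)
    (hA : memT k (((xtMat n N p q lam)⁻¹ * g.map coeO * xMat n N p q lam) ⟨q + 1, by omega⟩ j)) :
    PowerSeries.X ∣ g ⟨q + 1, by omega⟩ j := by
  have hu : xtCol n N p q lam ⟨q + 1, by omega⟩ = 0 := if_neg (by simp)
  have hw : xRow n N p q lam j = 0 := if_neg (by omega)
  rw [xtMat_inv_mul_mul_xMat_apply hpq hq, hu, hw] at hA
  simp only [zero_mul, mul_zero, add_zero, sub_zero, map_apply] at hA
  exact X_dvd_of_memT_coeO hA hk

theorem X_dvd_apply_succ_succ (hN : 1 ≤ N) (hpq : p < q) (hq : q < n)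
    (hlam : ∀ i j : ℕ, i ≤ j → j ≤ n → lam j ≤ lam i)
    (h2a : (N : ℤ) ≤ lam p - lam (p + 1)) (h2b : (N : ℤ) ≤ lam q - lam (q + 1))
    (g : Matrix (Fin (n + 1)) (Fin (n + 1)) OO)
    (hg : memT (lam q - lam (q + 1)) (coeO (g ⟨q, by omega⟩ ⟨q + 1, by omega⟩)))
    {k : ℤ} (hk : lam q - lam (q + 1) - N < k)
    (hA : memT k (((xtMat n N p q lam)⁻¹ * g.map coeO * xMat n N p q lam)
      ⟨q, by omega⟩ ⟨q + 1, by omega⟩)) :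
    PowerSeries.X ∣ g ⟨q + 1, by omega⟩ ⟨q + 1, by omega⟩ := by
  set c := lam q - lam (q + 1) - N
  set d := lam p - lam (q + 1) - N
  set A := ((xtMat n N p q lam)⁻¹ * g.map coeO * xMat n N p q lam)
    ⟨q, by omega⟩ ⟨q + 1, by omega⟩ with hA_def
  have hlam_pq := hlam (p + 1) q hpq hq.le
  have hu : xtCol n N p q lam ⟨q, by omega⟩ = tz c := if_pos ⟨hpq.le, le_rfl⟩
  have hw : xRow n N p q lam ⟨q + 1, by omega⟩ = tz d := if_pos ⟨by simp; omega, le_rfl⟩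
  rw [xtMat_inv_mul_mul_xMat_apply hpq.le hq, hu, hw] at hA_def
  simp only [map_apply] at hA_def
  have hsolve : tz c * coeO (g ⟨q + 1, by omega⟩ ⟨q + 1, by omega⟩) =
      coeO (g ⟨q, by omega⟩ ⟨q + 1, by omega⟩) + coeO (g ⟨q, by omega⟩ ⟨p, by omega⟩) * tz d
        - tz c * coeO (g ⟨q + 1, by omega⟩ ⟨p, by omega⟩) * tz d - A := by
    linear_combination hA_def
  refine X_dvd_of_memT_tz_mul (k := c + 1) ?_ (lt_add_one c)
  rw [hsolve]
  refine (((hg.mono ?_).add ?_).sub ?_).sub (hA.mono (by omega))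
  · omega
  · exact ((memT_coeO _).mul (memT_tz d)).mono (by omega)
  · exact (((memT_tz c).mul (memT_coeO _)).mul (memT_tz d)).mono (by omega)

end Entries

/-- Indices are `0`-based: the paper's columns `q+1 ≤ j ≤ n` are `q+1 ≤ j < n` here. -/
theorem stmt9 (n : ℕ) (N : ℕ) (hN : 1 ≤ N)
    (p q : ℕ) (hpq : p < q) (hq : q < n)
    (lam mu : ℕ → ℤ)
    (hlam : ∀ i j : ℕ, i ≤ j → j ≤ n → lam j ≤ lam i)
    (hmu : ∀ i j : ℕ, i ≤ j → j ≤ n → mu j ≤ mu i)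
    (nus : ℕ → ℤ) (hnus : ∀ i, nus i = lam i + mu i - N * bcov p q i)
    (h2a : (N : ℤ) ≤ lam p - lam (p + 1)) (h2b : (N : ℤ) ≤ lam q - lam (q + 1))
    (h2d : (N : ℤ) ≤ mu q - mu (q + 1))
    (g : Matrix (Fin (n+1)) (Fin (n+1)) OO)
    (hglam : ∀ i j : Fin (n+1), i < j → memT (lam i - lam j) (coeO (g i j)))
    (hgnus : ∀ i j : Fin (n+1), i < j →
      memT (nus i - nus j) (((xtMat n N p q lam)⁻¹ * g.map coeO * xMat n N p q lam) i j)) :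
    ∀ j : Fin (n+1), q + 1 ≤ (j : ℕ) → (j : ℕ) < n →
      (PowerSeries.X : OO) ∣ g (⟨q + 1, by omega⟩ : Fin (n+1)) j := by
  intro j hj _
  have hnus_succ : nus (q + 1) = lam (q + 1) + mu (q + 1) + N := by
    rw [hnus, bcov_succ (by omega)]; ring
  rcases hj.eq_or_lt with hj | hj
  · obtain rfl : j = ⟨q + 1, Nat.succ_lt_succ hq⟩ := Fin.ext hj.symm
    have hk : lam q - lam (q + 1) - N < nus q - nus (q + 1) := by
      rw [hnus q, bcov_eq_zero (by omega) (by omega), hnus_succ]; omega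
    exact X_dvd_apply_succ_succ hN hpq hq hlam h2a h2b g (hglam _ _ (by simp)) hk
      (hgnus _ _ (by simp))
  · have hk : 0 < nus (q + 1) - nus j := by
      have := hlam (q + 1) j hj.le (by omega)
      have := hmu (q + 1) j hj.le (by omega)
      rw [hnus j, bcov_eq_zero (by omega) (by omega), hnus_succ]; omega
    exact X_dvd_apply_succ_of_lt hpq.le hq g j hj hk (hgnus _ _ hj)
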